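/- arXiv:2307.01987 — 3 statements merged into one kernel-verified Lean document; each statement's English description precedes it below -/
import Mathlib

section
/- For the normalized four-qubit state |ψ₂⟩ = (|0000⟩ + |1011⟩ + |1101⟩ + |1110⟩)/2, the reduced density matrices satisfy tr(ρ₁²) = 5/8, tr(ρ₂²) = tr(ρ₃²) = tr(ρ₄²) = 1/2, and tr(ρ₁₂²) = tr(ρ₁₃²) = tr(ρ₁₄²) = 3/8; equivalently, the concurrences are C₁ = √3/2, C₂ = C₃ = C₄ = 1, and C₁₂ = C₁₃ = C₁₄ = √5/2. -/
open scoped BigOperators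

noncomputable section

/-- A four-qubit pure state amplitude function on the computational basis. -/
abbrev QState := Fin 2 → Fin 2 → Fin 2 → Fin 2 → ℂ

/-- Reduced density matrix of qubit 1. -/
def rho1 (ψ : QState) (a b : Fin 2) : ℂ := ∑ i, ∑ j, ∑ k, ψ a i j k * star (ψ b i j k)
/-- Reduced density matrix of qubit 2. -/
def rho2 (ψ : QState) (a b : Fin 2) : ℂ := ∑ i, ∑ j, ∑ k, ψ i a j k * star (ψ i b j k)
/-- Reduced density matrix of qubit 3. -/
def rho3 (ψ : QState) (a b : Fin 2) : ℂ := ∑ i, ∑ j, ∑ k, ψ i j a k * star (ψ i j b k)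
/-- Reduced density matrix of qubit 4. -/
def rho4 (ψ : QState) (a b : Fin 2) : ℂ := ∑ i, ∑ j, ∑ k, ψ i j k a * star (ψ i j k b)

/-- tr(ρ²) for a one-qubit density matrix. -/
def purity1 (ρ : Fin 2 → Fin 2 → ℂ) : ℂ := ∑ a, ∑ b, ρ a b * ρ b a

/-- Reduced density matrix of qubits 1,2. -/
def rho12 (ψ : QState) (a b : Fin 2 × Fin 2) : ℂ :=
  ∑ i, ∑ j, ψ a.1 a.2 i j * star (ψ b.1 b.2 i j)
/-- Reduced density matrix of qubits 1,3. -/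
def rho13 (ψ : QState) (a b : Fin 2 × Fin 2) : ℂ :=
  ∑ i, ∑ j, ψ a.1 i a.2 j * star (ψ b.1 i b.2 j)
/-- Reduced density matrix of qubits 1,4. -/
def rho14 (ψ : QState) (a b : Fin 2 × Fin 2) : ℂ :=
  ∑ i, ∑ j, ψ a.1 i j a.2 * star (ψ b.1 i j b.2)

/-- tr(ρ²) for a two-qubit density matrix. -/
def purity2 (ρ : Fin 2 × Fin 2 → Fin 2 × Fin 2 → ℂ) : ℂ := ∑ a, ∑ b, ρ a b * ρ b a

/-- |ψ₂⟩ = (|0000⟩ + |1011⟩ + |1101⟩ + |1110⟩)/2 -/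
def psi2 : QState := fun a b c d =>
  if (a, b, c, d) = (0, 0, 0, 0) ∨ (a, b, c, d) = (1, 0, 1, 1) ∨
     (a, b, c, d) = (1, 1, 0, 1) ∨ (a, b, c, d) = (1, 1, 1, 0)
  then (1 / 2 : ℂ) else 0

/-!
The state `ψ₂` is invariant under every permutation of qubits 2, 3, 4, so `ρ₃ = ρ₄ = ρ₂` and
`ρ₁₃ = ρ₁₄ = ρ₁₂`. No two of the four basis vectors in `ψ₂` that differ on the kept qubits agree on
the traced-out ones, so `ρ₁`, `ρ₂` and `ρ₁₂` are diagonal, and `tr ρ²` is the sum of the squared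
diagonal entries.
-/

open Matrix

lemma purity1_eq_trace (ρ : Matrix (Fin 2) (Fin 2) ℂ) : purity1 ρ = trace (ρ * ρ) := by
  simp [purity1, trace, mul_apply]

lemma purity2_eq_trace (ρ : Matrix (Fin 2 × Fin 2) (Fin 2 × Fin 2) ℂ) :
    purity2 ρ = trace (ρ * ρ) := by
  simp [purity2, trace, mul_apply]

lemma trace_diagonal_mul_self {n R : Type*} [Fintype n] [DecidableEq n] [CommSemiring R]
    (d : n → R) : trace (diagonal d * diagonal d) = ∑ i, d i ^ 2 := by
  simp [diagonal_mul_diagonal, sq]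

section Symmetric

variable {ψ : QState}

lemma rho3_eq_rho2 (h : ∀ a b c d, ψ a b c d = ψ a c b d) : rho3 ψ = rho2 ψ := by
  ext a b
  simp only [rho3, rho2, h _ _ a, h _ _ b]

lemma rho4_eq_rho3 (h : ∀ a b c d, ψ a b c d = ψ a b d c) : rho4 ψ = rho3 ψ := by
  ext a b
  simp only [rho4, rho3, h _ _ _ a, h _ _ _ b]

lemma rho13_eq_rho12 (h : ∀ a b c d, ψ a b c d = ψ a c b d) : rho13 ψ = rho12 ψ := by
  ext a b
  simp only [rho13, rho12, h _ _ a.2, h _ _ b.2]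

lemma rho14_eq_rho13 (h : ∀ a b c d, ψ a b c d = ψ a b d c) : rho14 ψ = rho13 ψ := by
  ext a b
  simp only [rho14, rho13, h _ _ _ a.2, h _ _ _ b.2]

end Symmetric

lemma psi2_swap23 (a b c d : Fin 2) : psi2 a b c d = psi2 a c b d := by
  fin_cases a <;> fin_cases b <;> fin_cases c <;> fin_cases d <;> rfl

lemma psi2_swap34 (a b c d : Fin 2) : psi2 a b c d = psi2 a b d c := by
  fin_cases a <;> fin_cases b <;> fin_cases c <;> fin_cases d <;> rfl

lemma rho1_psi2 : rho1 psi2 = diagonal ![1 / 4, 3 / 4] := by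
  ext a b
  fin_cases a <;> fin_cases b <;> norm_num [rho1, psi2, Fin.sum_univ_two, map_ofNat]

lemma rho2_psi2 : rho2 psi2 = diagonal ![1 / 2, 1 / 2] := by
  ext a b
  fin_cases a <;> fin_cases b <;> norm_num [rho2, psi2, Fin.sum_univ_two, map_ofNat]

lemma rho12_psi2 : rho12 psi2 = diagonal fun p => ![![1 / 4, 0], ![1 / 4, 1 / 2]] p.1 p.2 := by
  ext ⟨a, a'⟩ ⟨b, b'⟩
  fin_cases a <;> fin_cases a' <;> fin_cases b <;> fin_cases b' <;>
    norm_num [rho12, psi2, Fin.sum_univ_two, map_ofNat]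

lemma purity1_rho1_psi2 : purity1 (rho1 psi2) = 5 / 8 := by
  rw [rho1_psi2, purity1_eq_trace, trace_diagonal_mul_self, Fin.sum_univ_two]
  norm_num

lemma purity1_rho2_psi2 : purity1 (rho2 psi2) = 1 / 2 := by
  rw [rho2_psi2, purity1_eq_trace, trace_diagonal_mul_self, Fin.sum_univ_two]
  norm_num

lemma purity2_rho12_psi2 : purity2 (rho12 psi2) = 3 / 8 := by
  rw [rho12_psi2, purity2_eq_trace, trace_diagonal_mul_self, Fintype.sum_prod_type,
    Fin.sum_univ_two]
  norm_num

lemma sqrt_div_four (x : ℝ) : √(x / 4) = √x / 2 := by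
  rw [Real.sqrt_div' _ (by norm_num), show (4 : ℝ) = 2 ^ 2 by norm_num,
    Real.sqrt_sq (by norm_num)]

theorem stmt1 :
    purity1 (rho1 psi2) = 5 / 8 ∧
    purity1 (rho2 psi2) = 1 / 2 ∧ purity1 (rho3 psi2) = 1 / 2 ∧ purity1 (rho4 psi2) = 1 / 2 ∧
    purity2 (rho12 psi2) = 3 / 8 ∧ purity2 (rho13 psi2) = 3 / 8 ∧ purity2 (rho14 psi2) = 3 / 8 ∧
    Real.sqrt (2 * (1 - (purity1 (rho1 psi2)).re)) = Real.sqrt 3 / 2 ∧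
    Real.sqrt (2 * (1 - (purity1 (rho2 psi2)).re)) = 1 ∧
    Real.sqrt (2 * (1 - (purity1 (rho3 psi2)).re)) = 1 ∧
    Real.sqrt (2 * (1 - (purity1 (rho4 psi2)).re)) = 1 ∧
    Real.sqrt (2 * (1 - (purity2 (rho12 psi2)).re)) = Real.sqrt 5 / 2 ∧
    Real.sqrt (2 * (1 - (purity2 (rho13 psi2)).re)) = Real.sqrt 5 / 2 ∧
    Real.sqrt (2 * (1 - (purity2 (rho14 psi2)).re)) = Real.sqrt 5 / 2 := by
  rw [rho4_eq_rho3 psi2_swap34, rho3_eq_rho2 psi2_swap23, rho14_eq_rho13 psi2_swap34,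
    rho13_eq_rho12 psi2_swap23, purity1_rho1_psi2, purity1_rho2_psi2, purity2_rho12_psi2]
  norm_num [sqrt_div_four]
end
end

section
/- For every real a ≠ 0, the inequality 2√(a²(a² + 3)) + 4√(a⁴ + 3a² + 2) > 2√3 · √(a⁴ + 4a² + 2) holds. -/
/-- Squaring, this is `3 (a⁴ + 4a² + 2) < 4 (a⁴ + 3a² + 2)`, i.e. `0 < a⁴ + 2`. -/
lemma sqrt_three_mul_sqrt_lt_two_mul_sqrt (a : ℝ) :
    √3 * √(a ^ 4 + 4 * a ^ 2 + 2) < 2 * √(a ^ 4 + 3 * a ^ 2 + 2) := by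
  refine lt_of_pow_lt_pow_left₀ 2 (by positivity) ?_
  rw [mul_pow, mul_pow, Real.sq_sqrt (by norm_num), Real.sq_sqrt (by positivity),
    Real.sq_sqrt (by positivity)]
  nlinarith [sq_nonneg (a ^ 2)]

theorem stmt4_general (a : ℝ) :
    2 * Real.sqrt (a ^ 2 * (a ^ 2 + 3)) + 4 * Real.sqrt (a ^ 4 + 3 * a ^ 2 + 2) >
      2 * Real.sqrt 3 * Real.sqrt (a ^ 4 + 4 * a ^ 2 + 2) := by
  have h_apex := sqrt_three_mul_sqrt_lt_two_mul_sqrt a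
  have h_nonneg : 0 ≤ √(a ^ 2 * (a ^ 2 + 3)) := Real.sqrt_nonneg _
  linarith

theorem stmt4 (a : ℝ) (ha : a ≠ 0) :
    2 * Real.sqrt (a ^ 2 * (a ^ 2 + 3)) + 4 * Real.sqrt (a ^ 4 + 3 * a ^ 2 + 2) >
      2 * Real.sqrt 3 * Real.sqrt (a ^ 4 + 4 * a ^ 2 + 2) :=
  stmt4_general a
end

section
/- For all real a, b with (a, b) ≠ (0, 0), the inequality 3a⁴ + 18a²b² + 4a² + 3b⁴ + 4b² + 4 > 0 holds; consequently, the bipartition concurrences C₁₂ = C₁₄ = √(a²(4b²+2) + a⁴ + (b²+1)²)/(a²+b²+1) and C₁₃ = √(a⁴ − 2a²(b²−2) + b⁴ + 4b²)/(a²+b²+1) of the state |ψ₆⟩ satisfy the strict triangle inequality C₁₂ + C₁₄ > C₁₃. -/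
theorem stmt12 (a b : ℝ) (hab : (a, b) ≠ (0, 0)) :
    3 * a ^ 4 + 18 * a ^ 2 * b ^ 2 + 4 * a ^ 2 + 3 * b ^ 4 + 4 * b ^ 2 + 4 > 0 ∧
    Real.sqrt (a ^ 2 * (4 * b ^ 2 + 2) + a ^ 4 + (b ^ 2 + 1) ^ 2) / (a ^ 2 + b ^ 2 + 1) +
        Real.sqrt (a ^ 2 * (4 * b ^ 2 + 2) + a ^ 4 + (b ^ 2 + 1) ^ 2) / (a ^ 2 + b ^ 2 + 1) >
      Real.sqrt (a ^ 4 - 2 * a ^ 2 * (b ^ 2 - 2) + b ^ 4 + 4 * b ^ 2) /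
        (a ^ 2 + b ^ 2 + 1) := by
  constructor
  · positivity
  · have hd : (0:ℝ) < a ^ 2 + b ^ 2 + 1 := by positivity
    rw [← add_div, gt_iff_lt, div_lt_div_iff₀ hd hd]
    have hY : a ^ 4 - 2 * a ^ 2 * (b ^ 2 - 2) + b ^ 4 + 4 * b ^ 2 <
        4 * (a ^ 2 * (4 * b ^ 2 + 2) + a ^ 4 + (b ^ 2 + 1) ^ 2) := by nlinarith [sq_nonneg a, sq_nonneg b, sq_nonneg (a*b)]
    have h2 : Real.sqrt (a ^ 4 - 2 * a ^ 2 * (b ^ 2 - 2) + b ^ 4 + 4 * b ^ 2) <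
        Real.sqrt (4 * (a ^ 2 * (4 * b ^ 2 + 2) + a ^ 4 + (b ^ 2 + 1) ^ 2)) := by
      apply Real.sqrt_lt_sqrt _ hY
      nlinarith [sq_nonneg (a^2 - b^2), sq_nonneg a, sq_nonneg b]
    have h3 : Real.sqrt (4 * (a ^ 2 * (4 * b ^ 2 + 2) + a ^ 4 + (b ^ 2 + 1) ^ 2)) =
        2 * Real.sqrt (a ^ 2 * (4 * b ^ 2 + 2) + a ^ 4 + (b ^ 2 + 1) ^ 2) := by
      rw [show (4:ℝ) = 2^2 by norm_num, Real.sqrt_mul (by positivity), Real.sqrt_sq (by norm_num)]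
    nlinarith [h2, h3, hd]
end
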